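/- arXiv:2404.09922 — 5 statements merged into one kernel-verified Lean document; each statement's English description precedes it below -/
import Mathlib

section
/- For every real ε ≥ 0, one has 2·log(1+ε) − 1 + (1+ε)^{−2} ≤ 2·ε², where log is the natural logarithm. -/
theorem kl_limit_le_two_eps_sq (ε : ℝ) (hε : 0 ≤ ε) :
    2 * Real.log (1 + ε) - 1 + ((1 + ε) ^ 2)⁻¹ ≤ 2 * ε ^ 2 := by
  have ht : (0:ℝ) < 1 + ε := by linarith
  have hx : 0 ≤ Real.log (1 + ε) := Real.log_nonneg (by linarith)
  have h1 : Real.log (1 + ε) ≤ Real.sinh (Real.log (1 + ε)) :=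
    Real.self_le_sinh_iff.mpr hx
  rw [Real.sinh_log ht] at h1
  have hinv : (1 + ε)⁻¹ * (1 + ε) = 1 := inv_mul_cancel₀ ht.ne'
  have hinv2 : ((1 + ε) ^ 2)⁻¹ * (1 + ε) ^ 2 = 1 :=
    inv_mul_cancel₀ (pow_ne_zero 2 ht.ne')
  nlinarith [sq_nonneg ε, sq_nonneg (1 + ε), mul_pos ht ht,
    mul_nonneg (mul_nonneg hε hε) hε, sq_nonneg (ε * (1 + ε))]
end

section
/- Let L be a positive natural number, s ∈ ℂ^L, and let c > 0, w > 0, ε ≥ 0 be reals. Let S be the L×L matrix with entries S_{ij} = s_i·conj(s_j), set x = ‖s‖² = Σ_i |s_i|² and β = c/w, and define Σ₀ = c·S + w·I and Σ₁ = c·(1+ε)²·S + w·I. Then Σ₁ is invertible and det(Σ₁⁻¹ · Σ₀) = 1 − β·ε·(2+ε)·x / (1 + β·(1+ε)²·x). -/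
open Matrix in
lemma det_aux (L : ℕ) (s : Fin L → ℂ) (a w : ℂ) (hw : w ≠ 0) :
    (a • Matrix.vecMulVec s (star s) + w • (1 : Matrix (Fin L) (Fin L) ℂ)).det
      = w ^ L * (1 + (a / w) * (star s ⬝ᵥ s)) := by
  have h1 : a • Matrix.vecMulVec s (star s) + w • (1 : Matrix (Fin L) (Fin L) ℂ)
      = w • (1 + Matrix.vecMulVec ((a / w) • s) (star s)) := by
    rw [smul_add, add_comm]
    congr 1
    ext i j
    simp [Matrix.vecMulVec_apply, Matrix.smul_apply, smul_eq_mul]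
    field_simp
  rw [h1, Matrix.det_smul, Matrix.vecMulVec_eq Unit, Matrix.det_one_add_replicateCol_mul_replicateRow,
    Fintype.card_fin]
  congr 1
  rw [dotProduct_smul, smul_eq_mul, mul_comm]

open Matrix in
theorem det_sigma1_inv_sigma0 (L : ℕ) (hL : 0 < L) (s : Fin L → ℂ) (c w ε : ℝ)
    (hc : 0 < c) (hw : 0 < w) (hε : 0 ≤ ε) :
    letI S : Matrix (Fin L) (Fin L) ℂ := Matrix.vecMulVec s (star s)
    letI x : ℝ := ∑ i, ‖s i‖ ^ 2
    letI β : ℝ := c / w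
    letI Sig0 : Matrix (Fin L) (Fin L) ℂ := (c : ℂ) • S + (w : ℂ) • 1
    letI Sig1 : Matrix (Fin L) (Fin L) ℂ := ((c * (1 + ε) ^ 2 : ℝ) : ℂ) • S + (w : ℂ) • 1
    IsUnit Sig1 ∧
      (Sig1⁻¹ * Sig0).det =
        ((1 - β * ε * (2 + ε) * x / (1 + β * (1 + ε) ^ 2 * x) : ℝ) : ℂ) := by
  set x : ℝ := ∑ i, ‖s i‖ ^ 2 with hxdef
  have hwC : (w : ℂ) ≠ 0 := Complex.ofReal_ne_zero.mpr hw.ne'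
  have hx0 : 0 ≤ x := Finset.sum_nonneg fun i _ => by positivity
  have hxc : ((x : ℝ) : ℂ) = star s ⬝ᵥ s := by
    rw [hxdef]
    push_cast
    refine Finset.sum_congr rfl fun i _ => ?_
    rw [← Complex.ofReal_pow, Complex.sq_norm, ← Complex.mul_conj, mul_comm]
    rfl
  have hdet0 : ((c : ℂ) • Matrix.vecMulVec s (star s) + (w : ℂ) • 1).det
      = (w : ℂ) ^ L * (1 + ((c : ℂ) / w) * (x : ℂ)) := by
    rw [det_aux L s _ _ hwC, hxc]
  have hdet1 : (((c * (1 + ε) ^ 2 : ℝ) : ℂ) • Matrix.vecMulVec s (star s) + (w : ℂ) • 1).det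
      = (w : ℂ) ^ L * (1 + (((c * (1 + ε) ^ 2 : ℝ) : ℂ) / w) * (x : ℂ)) := by
    rw [det_aux L s _ _ hwC, hxc]
  have hpos1 : (0 : ℝ) < 1 + c * (1 + ε) ^ 2 / w * x := by positivity
  have hdet1' : (((c * (1 + ε) ^ 2 : ℝ) : ℂ) • Matrix.vecMulVec s (star s) + (w : ℂ) • 1).det
      = ((w ^ L * (1 + c * (1 + ε) ^ 2 / w * x) : ℝ) : ℂ) := by
    rw [hdet1]; push_cast; ring
  have hdet1ne : (((c * (1 + ε) ^ 2 : ℝ) : ℂ) • Matrix.vecMulVec s (star s) + (w : ℂ) • 1).det ≠ 0 := by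
    rw [hdet1']
    exact Complex.ofReal_ne_zero.mpr (by positivity)
  refine ⟨(Matrix.isUnit_iff_isUnit_det _).mpr (isUnit_iff_ne_zero.mpr hdet1ne), ?_⟩
  rw [Matrix.det_mul, Matrix.det_nonsing_inv, Ring.inverse_eq_inv', hdet1', hdet0]
  have hreal : (w ^ L * (1 + c * (1 + ε) ^ 2 / w * x))⁻¹ * (w ^ L * (1 + c / w * x))
      = 1 - c / w * ε * (2 + ε) * x / (1 + c / w * (1 + ε) ^ 2 * x) := by
    have hwL : (w : ℝ) ^ L ≠ 0 := pow_ne_zero _ hw.ne'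
    have hd : 1 + c / w * (1 + ε) ^ 2 * x ≠ 0 := by positivity
    field_simp
    ring
  rw [← hreal]
  push_cast
  ring
end

section
/- Let L be a positive natural number, s ∈ ℂ^L, and let c > 0, w > 0, ε ≥ 0 be reals. Let S be the L×L matrix with entries S_{ij} = s_i·conj(s_j), set x = ‖s‖² = Σ_i |s_i|² and β = c/w, and define Σ₀ = c·S + w·I and Σ₁ = c·(1+ε)²·S + w·I. Then trace(Σ₁⁻¹ · Σ₀) = L − β·ε·(2+ε)·x / (1 + β·(1+ε)²·x). -/
open Matrix in
theorem trace_sigma1_inv_sigma0 (L : ℕ) (hL : 0 < L) (s : Fin L → ℂ) (c w ε : ℝ)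
    (hc : 0 < c) (hw : 0 < w) (hε : 0 ≤ ε) :
    letI S : Matrix (Fin L) (Fin L) ℂ := Matrix.vecMulVec s (star s)
    letI x : ℝ := ∑ i, ‖s i‖ ^ 2
    letI β : ℝ := c / w
    letI Sig0 : Matrix (Fin L) (Fin L) ℂ := (c : ℂ) • S + (w : ℂ) • 1
    letI Sig1 : Matrix (Fin L) (Fin L) ℂ := ((c * (1 + ε) ^ 2 : ℝ) : ℂ) • S + (w : ℂ) • 1
    IsUnit Sig1 ∧
      (Sig1⁻¹ * Sig0).trace =
        (((L : ℝ) - β * ε * (2 + ε) * x / (1 + β * (1 + ε) ^ 2 * x) : ℝ) : ℂ) := by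
  set S : Matrix (Fin L) (Fin L) ℂ := Matrix.vecMulVec s (star s) with hS
  set x : ℝ := ∑ i, ‖s i‖ ^ 2 with hx
  have ha' : (c * (1 + ε) ^ 2 : ℝ) = c * (1 + ε) ^ 2 := rfl
  set a : ℝ := c * (1 + ε) ^ 2 with ha
  set d : ℝ := w + a * x with hd
  have hx0 : 0 ≤ x := Finset.sum_nonneg fun i _ => by positivity
  have ha0 : 0 < a := by positivity
  have hd0 : 0 < d := by positivity
  have hSS : S * S = (x : ℂ) • S := by
    ext i j
    simp only [hS, Matrix.mul_apply, Matrix.vecMulVec_apply, Pi.star_apply, Matrix.smul_apply,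
      smul_eq_mul]
    rw [hx]
    push_cast
    rw [Finset.sum_mul]
    congr 1
    ext k
    simp only [Complex.star_def]
    rw [← Complex.ofReal_pow, Complex.sq_norm, ← Complex.mul_conj]
    ring
  have htrS : S.trace = (x : ℂ) := by
    simp only [Matrix.trace, Matrix.diag, hS, Matrix.vecMulVec_apply, Pi.star_apply, hx]
    push_cast
    congr 1
    ext k
    simp only [Complex.star_def]
    rw [← Complex.ofReal_pow, Complex.sq_norm, Complex.mul_conj]
  set N : Matrix (Fin L) (Fin L) ℂ := (d : ℂ) • 1 - (a : ℂ) • S with hN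
  set Sig0 : Matrix (Fin L) (Fin L) ℂ := (c : ℂ) • S + (w : ℂ) • 1 with hSig0
  set Sig1 : Matrix (Fin L) (Fin L) ℂ := ((a : ℝ) : ℂ) • S + (w : ℂ) • 1 with hSig1
  have hdw : ((d * w : ℝ) : ℂ) ≠ 0 := by
    push_cast
    exact mul_ne_zero (Complex.ofReal_ne_zero.mpr hd0.ne') (Complex.ofReal_ne_zero.mpr hw.ne')
  have hNmul : Sig1 * N = ((d * w : ℝ) : ℂ) • 1 := by
    simp only [hSig1, hN, Matrix.add_mul, Matrix.mul_sub, Matrix.mul_smul, Matrix.smul_mul,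
      Matrix.mul_one, Matrix.one_mul, hSS, smul_smul]
    match_scalars <;> (push_cast [hd]; ring)
  set M : Matrix (Fin L) (Fin L) ℂ := (((d * w)⁻¹ : ℝ) : ℂ) • N with hM
  have h1 : Sig1 * M = 1 := by
    rw [hM, Matrix.mul_smul, hNmul, smul_smul, ← Complex.ofReal_mul,
      inv_mul_cancel₀ (mul_ne_zero hd0.ne' hw.ne'), Complex.ofReal_one, one_smul]
  have h2 : M * Sig1 = 1 := mul_eq_one_comm.mp h1
  have hUnit : IsUnit Sig1 := ⟨⟨Sig1, M, h1, h2⟩, rfl⟩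
  have hinv : Sig1⁻¹ = M := Matrix.inv_eq_right_inv h1
  have hNSig0 : N * Sig0 = ((d * w : ℝ) : ℂ) • 1 + ((w * (c - a) : ℝ) : ℂ) • S := by
    simp only [hN, hSig0, Matrix.sub_mul, Matrix.mul_add, Matrix.mul_smul, Matrix.smul_mul,
      Matrix.mul_one, Matrix.one_mul, hSS, smul_smul]
    match_scalars <;> (push_cast [hd]; ring)
  refine ⟨hUnit, ?_⟩
  rw [hinv, hM, Matrix.smul_mul, hNSig0]
  rw [smul_add, smul_smul, smul_smul, Matrix.trace_add, Matrix.trace_smul, Matrix.trace_smul,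
    Matrix.trace_one, htrS]
  have keyR : (d * w)⁻¹ * (d * w) * (L : ℝ) + (d * w)⁻¹ * (w * (c - a)) * x =
      (L : ℝ) - (c / w) * ε * (2 + ε) * x / (1 + (c / w) * (1 + ε) ^ 2 * x) := by
    have hden : (0:ℝ) < 1 + c / w * (1 + ε) ^ 2 * x := by positivity
    rw [hd, ha]
    have h2' : (0:ℝ) < w + c * (1 + ε) ^ 2 * x := by positivity
    field_simp
    ring
  simp only [smul_eq_mul, Fintype.card_fin]
  exact_mod_cast keyR
end

section
/- Fix reals σ² > 0, a ≥ 0, b > 0 and τ. For each positive integer n, let μ_n be the Gamma distribution on ℝ with shape parameter n and rate 1/2 (equivalently, the chi-squared distribution with 2n degrees of freedom), and define P_F(n) = μ_n{v : a + σ²·v/(2n) > τ} and P_M(n) = μ_n{v : a + b + σ²·v/(2n) < τ}. If τ < a + σ² or τ > a + b + σ², then P_F(n) + P_M(n) → 1 as n → ∞. -/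
open MeasureTheory ProbabilityTheory Filter Real Set
open scoped ENNReal NNReal

private lemma blind_intk (s : ℝ) (hs : -1 < s) :
    IntegrableOn (fun x : ℝ => x ^ s * Real.exp (-(1/2 * x))) (Ioi 0) := by
  have := integrableOn_rpow_mul_exp_neg_mul_rpow hs zero_lt_one (by norm_num : (0:ℝ) < 1/2)
  refine this.congr_fun (fun x hx => ?_) measurableSet_Ioi
  simp only [Real.rpow_one, neg_mul]

private lemma blind_intval (s : ℝ) (hs : 0 < s) :
    ∫ x in Ioi (0:ℝ), x ^ (s - 1) * Real.exp (-(1/2 * x)) = 2 ^ s * Real.Gamma s := by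
  have := Real.integral_rpow_mul_exp_neg_mul_Ioi hs (by norm_num : (0:ℝ) < 1/2)
  rw [show ((1:ℝ)/(1/2)) = 2 by norm_num] at this
  simpa using this

private noncomputable def blindC (n : ℕ) : ℝ := (1/2:ℝ) ^ (n:ℝ) / Real.Gamma n

private lemma blind_eqOn (n : ℕ) :
    EqOn (fun x : ℝ => gammaPDFReal n (1/2) x * (x - 2*(n:ℝ))^2)
    (fun x : ℝ => blindC n * (x ^ ((n:ℝ)+2-1) * Real.exp (-(1/2*x))
      - (4*(n:ℝ)) * (x ^ ((n:ℝ)+1-1) * Real.exp (-(1/2*x)))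
      + (4*(n:ℝ)^2) * (x ^ ((n:ℝ)-1) * Real.exp (-(1/2*x))))) (Ioi 0) := by
  intro x hx
  have hx' : (0:ℝ) < x := hx
  simp only [gammaPDFReal, if_pos hx'.le, blindC]
  have h2 : x ^ ((n:ℝ)-1) * x^2 = x ^ ((n:ℝ)+2-1) := by
    rw [← Real.rpow_natCast x 2, ← Real.rpow_add hx']
    norm_num
    ring_nf
  have h1 : x ^ ((n:ℝ)-1) * x = x ^ ((n:ℝ)+1-1) := by
    nth_rewrite 2 [← Real.rpow_one x]
    rw [← Real.rpow_add hx']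
    ring_nf
  rw [← h2, ← h1]
  ring

private lemma blind_integrable_main (n : ℕ) (hn : 0 < n) :
    IntegrableOn (fun x : ℝ => gammaPDFReal n (1/2) x * (x - 2*(n:ℝ))^2) (Ioi 0) := by
  have hn1 : (1:ℝ) ≤ n := by exact_mod_cast hn
  have i2 := (blind_intk ((n:ℝ)+2-1) (by linarith)).const_mul (blindC n)
  have i1 := ((blind_intk ((n:ℝ)+1-1) (by linarith)).const_mul (4*(n:ℝ))).const_mul (blindC n)
  have i0 := ((blind_intk ((n:ℝ)-1) (by linarith)).const_mul (4*(n:ℝ)^2)).const_mul (blindC n)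
  have : IntegrableOn (fun x : ℝ => blindC n * (x ^ ((n:ℝ)+2-1) * Real.exp (-(1/2*x))
      - (4*(n:ℝ)) * (x ^ ((n:ℝ)+1-1) * Real.exp (-(1/2*x)))
      + (4*(n:ℝ)^2) * (x ^ ((n:ℝ)-1) * Real.exp (-(1/2*x))))) (Ioi 0) := by
    refine ((i2.sub i1).add i0).congr (ae_of_all _ fun x => ?_)
    simp only [Pi.add_apply, Pi.sub_apply]
    ring
  exact this.congr_fun (fun x hx => (blind_eqOn n hx).symm) measurableSet_Ioi

private lemma blind_real_int (n : ℕ) (hn : 0 < n) :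
    ∫ x in Ioi (0:ℝ), gammaPDFReal n (1/2) x * (x - 2*(n:ℝ))^2 = 4*(n:ℝ) := by
  have hn1 : (1:ℝ) ≤ n := by exact_mod_cast hn
  have hGpos : 0 < Real.Gamma n := Real.Gamma_pos_of_pos (by linarith)
  have hcongr : ∫ x in Ioi (0:ℝ), gammaPDFReal n (1/2) x * (x - 2*(n:ℝ))^2
      = ∫ x in Ioi (0:ℝ), blindC n * (x ^ ((n:ℝ)+2-1) * Real.exp (-(1/2*x))
      - (4*(n:ℝ)) * (x ^ ((n:ℝ)+1-1) * Real.exp (-(1/2*x)))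
      + (4*(n:ℝ)^2) * (x ^ ((n:ℝ)-1) * Real.exp (-(1/2*x)))) :=
    setIntegral_congr_fun measurableSet_Ioi (blind_eqOn n)
  rw [hcongr]
  have i2 := blind_intk ((n:ℝ)+2-1) (by linarith)
  have i1 := (blind_intk ((n:ℝ)+1-1) (by linarith)).const_mul (4*(n:ℝ))
  have i0 := (blind_intk ((n:ℝ)-1) (by linarith)).const_mul (4*(n:ℝ)^2)
  have e1 : Integrable (fun x : ℝ => x ^ ((n:ℝ)+2-1) * Real.exp (-(1/2*x))
      - (4*(n:ℝ)) * (x ^ ((n:ℝ)+1-1) * Real.exp (-(1/2*x)))) (volume.restrict (Ioi 0)) :=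
    i2.sub i1
  rw [integral_const_mul, integral_add e1 i0, integral_sub i2 i1,
    integral_const_mul, integral_const_mul]
  rw [show ((n:ℝ)+2-1) = ((n:ℝ)+2)-1 by ring, show ((n:ℝ)+1-1) = ((n:ℝ)+1)-1 by ring]
  rw [blind_intval ((n:ℝ)+2) (by linarith), blind_intval ((n:ℝ)+1) (by linarith),
    blind_intval (n:ℝ) (by linarith)]
  have hne : (n:ℝ) ≠ 0 := by positivity
  have hG2 : Real.Gamma ((n:ℝ)+2) = ((n:ℝ)+1) * ((n:ℝ) * Real.Gamma n) := by
    rw [show ((n:ℝ)+2) = ((n:ℝ)+1)+1 by ring, Real.Gamma_add_one (by positivity),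
      Real.Gamma_add_one hne]
  have hG1 : Real.Gamma ((n:ℝ)+1) = (n:ℝ) * Real.Gamma n := Real.Gamma_add_one hne
  have hp2 : (2:ℝ) ^ ((n:ℝ)+2) = 2 ^ (n:ℝ) * 4 := by
    rw [Real.rpow_add (by norm_num)]; norm_num
  have hp1 : (2:ℝ) ^ ((n:ℝ)+1) = 2 ^ (n:ℝ) * 2 := by
    rw [Real.rpow_add (by norm_num)]; norm_num
  have hhalf : (1/2:ℝ) ^ (n:ℝ) * 2 ^ (n:ℝ) = 1 := by
    rw [← Real.mul_rpow (by norm_num) (by norm_num)]; norm_num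
  rw [hG2, hG1, hp2, hp1, blindC]
  field_simp
  nlinarith [hhalf, hGpos]

private lemma blind_gamma_var (n : ℕ) (hn : 0 < n) :
    ∫⁻ v, ENNReal.ofReal ((v - 2*(n:ℝ))^2) ∂(gammaMeasure n (1/2))
      = ENNReal.ofReal (4*(n:ℝ)) := by
  have hnr : (0:ℝ) < (n:ℝ) := by exact_mod_cast hn
  have hmeas : Measurable (fun v : ℝ => ENNReal.ofReal ((v - 2*(n:ℝ))^2)) := by
    measurability
  have hpdf : Measurable (gammaPDF n (1/2)) :=
    (measurable_gammaPDFReal _ _).ennreal_ofReal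
  rw [gammaMeasure, lintegral_withDensity_eq_lintegral_mul _ hpdf hmeas]
  have hpt : ∀ v : ℝ, (gammaPDF n (1/2) * fun v => ENNReal.ofReal ((v - 2*(n:ℝ))^2)) v
      = ENNReal.ofReal (gammaPDFReal n (1/2) v * (v - 2*(n:ℝ))^2) := fun v => by
    rw [Pi.mul_apply, gammaPDF,
      ← ENNReal.ofReal_mul (gammaPDFReal_nonneg hnr (by norm_num) v)]
  rw [lintegral_congr hpt, ← lintegral_add_compl _ measurableSet_Ici, compl_Ici]
  have hzero : ∫⁻ v in Iio (0:ℝ),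
      ENNReal.ofReal (gammaPDFReal n (1/2) v * (v - 2*(n:ℝ))^2) = 0 := by
    rw [setLIntegral_congr_fun (g := fun _ => (0:ℝ≥0∞)) measurableSet_Iio
      (fun v (hv : v < 0) => by
        simp only [gammaPDFReal, if_neg (not_le.mpr hv), zero_mul, ENNReal.ofReal_zero]),
      lintegral_zero]
  rw [hzero, add_zero, setLIntegral_congr (Ioi_ae_eq_Ici (a := (0:ℝ))).symm,
    ← ofReal_integral_eq_lintegral_ofReal (blind_integrable_main n hn)
      (ae_of_all _ (fun v => mul_nonneg (gammaPDFReal_nonneg hnr (by norm_num) v) (sq_nonneg _))),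
    blind_real_int n hn]

private lemma blind_tail (n : ℕ) (hn : 0 < n) (ε : ℝ) (hε : 0 < ε) :
    gammaMeasure n (1/2) {v : ℝ | ε * (2*(n:ℝ)) ≤ |v - 2*(n:ℝ)|}
      ≤ ENNReal.ofReal (1/(ε^2*(n:ℝ))) := by
  have hnr : (0:ℝ) < (n:ℝ) := by exact_mod_cast hn
  set μ := gammaMeasure n (1/2) with hμ
  set c : ℝ≥0∞ := ENNReal.ofReal ((ε * (2*(n:ℝ)))^2) with hc
  have hcpos : 0 < (ε * (2*(n:ℝ)))^2 := by positivity
  have hmeas : Measurable (fun v : ℝ => ENNReal.ofReal ((v - 2*(n:ℝ))^2)) := by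
    measurability
  have hmarkov := mul_meas_ge_le_lintegral₀ (μ := μ)
    (f := fun v => ENNReal.ofReal ((v - 2*(n:ℝ))^2)) hmeas.aemeasurable c
  rw [hμ, blind_gamma_var n hn] at hmarkov
  have hsub : {v : ℝ | ε * (2*(n:ℝ)) ≤ |v - 2*(n:ℝ)|}
      ⊆ {v : ℝ | c ≤ ENNReal.ofReal ((v - 2*(n:ℝ))^2)} := by
    intro v hv
    simp only [mem_setOf_eq] at *
    exact ENNReal.ofReal_le_ofReal (by
      calc (ε * (2*(n:ℝ)))^2 ≤ |v - 2*(n:ℝ)|^2 := by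
            have := mul_pos hε (by positivity : (0:ℝ) < 2*(n:ℝ))
            nlinarith [abs_nonneg (v - 2*(n:ℝ))]
        _ = (v - 2*(n:ℝ))^2 := sq_abs _)
  calc μ {v : ℝ | ε * (2*(n:ℝ)) ≤ |v - 2*(n:ℝ)|}
      ≤ μ {v : ℝ | c ≤ ENNReal.ofReal ((v - 2*(n:ℝ))^2)} := measure_mono hsub
    _ ≤ ENNReal.ofReal (4*(n:ℝ)) / c := by
        rw [ENNReal.le_div_iff_mul_le (Or.inl (ENNReal.ofReal_pos.mpr hcpos).ne')
          (Or.inl ENNReal.ofReal_ne_top), mul_comm]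
        exact hmarkov
    _ = ENNReal.ofReal (1/(ε^2*(n:ℝ))) := by
        rw [hc, ← ENNReal.ofReal_div_of_pos hcpos]
        congr 1
        field_simp
        ring

private lemma blind_meas_ge (n : ℕ) (hn : 0 < n) {S : Set ℝ} (hS : MeasurableSet S)
    {ε : ℝ} (hε : 0 < ε)
    (h : Sᶜ ⊆ {v : ℝ | ε * (2*(n:ℝ)) ≤ |v - 2*(n:ℝ)|}) :
    1 - ENNReal.ofReal (1/(ε^2*(n:ℝ))) ≤ gammaMeasure n (1/2) S := by
  have hnr : (0:ℝ) < (n:ℝ) := by exact_mod_cast hn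
  have hp : IsProbabilityMeasure (gammaMeasure n (1/2)) :=
    isProbabilityMeasure_gammaMeasure hnr (by norm_num)
  rw [tsub_le_iff_right]
  calc (1:ℝ≥0∞) = gammaMeasure n (1/2) univ := measure_univ.symm
    _ = gammaMeasure n (1/2) S + gammaMeasure n (1/2) Sᶜ :=
        (measure_add_measure_compl hS).symm
    _ ≤ gammaMeasure n (1/2) S + ENNReal.ofReal (1/(ε^2*(n:ℝ))) :=
        add_le_add_right ((measure_mono h).trans (blind_tail n hn ε hε)) _

private lemma blind_lim0 (ε : ℝ) :
    Tendsto (fun n : ℕ => ENNReal.ofReal (1/(ε^2*(n:ℝ)))) atTop (nhds 0) := by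
  have h : Tendsto (fun n : ℕ => 1/(ε^2*(n:ℝ))) atTop (nhds 0) := by
    have := tendsto_one_div_atTop_nhds_zero_nat.const_mul (1/ε^2)
    rw [mul_zero] at this
    refine this.congr (fun n => ?_)
    rw [div_mul_div_comm, one_mul]
  simpa using ENNReal.tendsto_ofReal h

open MeasureTheory ProbabilityTheory Filter in
theorem blind_test_limit (σ2 a b τ : ℝ) (hσ : 0 < σ2) (ha : 0 ≤ a) (hb : 0 < b)
    (hτ : τ < a + σ2 ∨ a + b + σ2 < τ) :
    Tendsto
      (fun n : ℕ =>
        gammaMeasure n (1 / 2) {v : ℝ | τ < a + σ2 * v / (2 * n)} +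
          gammaMeasure n (1 / 2) {v : ℝ | a + b + σ2 * v / (2 * n) < τ})
      atTop (nhds 1) := by
  have hAmeas : ∀ n : ℕ, MeasurableSet {v : ℝ | τ < a + σ2 * v / (2 * (n:ℝ))} := by
    intro n
    exact measurableSet_lt measurable_const (by fun_prop)
  have hBmeas : ∀ n : ℕ, MeasurableSet {v : ℝ | a + b + σ2 * v / (2 * (n:ℝ)) < τ} := by
    intro n
    exact measurableSet_lt (by fun_prop) measurable_const
  -- generic upper-tail membership helpers will be proven inline in each case
  rcases hτ with hτ1 | hτ2
  · -- τ < a + σ2 : A has probability → 1, B → 0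
    set ε₁ : ℝ := (a + σ2 - τ)/σ2 with hε₁def
    set ε₂ : ℝ := (a + b + σ2 - τ)/σ2 with hε₂def
    have hε₁ : 0 < ε₁ := div_pos (by linarith) hσ
    have hε₂ : 0 < ε₂ := div_pos (by linarith) hσ
    have hA : ∀ n : ℕ, 0 < n → {v : ℝ | τ < a + σ2 * v / (2 * (n:ℝ))}ᶜ
        ⊆ {v : ℝ | ε₁ * (2*(n:ℝ)) ≤ |v - 2*(n:ℝ)|} := by
      intro n hn v hv
      have hnr : (0:ℝ) < (n:ℝ) := by exact_mod_cast hn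
      simp only [mem_compl_iff, mem_setOf_eq, not_lt] at hv
      have h2 : σ2 * v / (2*(n:ℝ)) ≤ τ - a := by linarith
      have h3 : σ2 * v ≤ (τ - a) * (2*(n:ℝ)) := by
        have := mul_le_mul_of_nonneg_right h2 (by positivity : (0:ℝ) ≤ 2*(n:ℝ))
        rwa [div_mul_cancel₀ _ (by positivity : (2*(n:ℝ)) ≠ 0)] at this
      have h4 : ε₁ * (2*(n:ℝ)) ≤ 2*(n:ℝ) - v := by
        rw [hε₁def, div_mul_eq_mul_div, div_le_iff₀ hσ]
        nlinarith
      show ε₁ * (2*(n:ℝ)) ≤ |v - 2*(n:ℝ)|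
      calc ε₁ * (2*(n:ℝ)) ≤ 2*(n:ℝ) - v := h4
        _ ≤ |2*(n:ℝ) - v| := le_abs_self _
        _ = |v - 2*(n:ℝ)| := abs_sub_comm _ _
    have hB : ∀ n : ℕ, 0 < n → {v : ℝ | a + b + σ2 * v / (2 * (n:ℝ)) < τ}
        ⊆ {v : ℝ | ε₂ * (2*(n:ℝ)) ≤ |v - 2*(n:ℝ)|} := by
      intro n hn v hv
      have hnr : (0:ℝ) < (n:ℝ) := by exact_mod_cast hn
      simp only [mem_setOf_eq] at hv
      have h2 : σ2 * v / (2*(n:ℝ)) ≤ τ - a - b := by linarith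
      have h3 : σ2 * v ≤ (τ - a - b) * (2*(n:ℝ)) := by
        have := mul_le_mul_of_nonneg_right h2 (by positivity : (0:ℝ) ≤ 2*(n:ℝ))
        rwa [div_mul_cancel₀ _ (by positivity : (2*(n:ℝ)) ≠ 0)] at this
      have h4 : ε₂ * (2*(n:ℝ)) ≤ 2*(n:ℝ) - v := by
        rw [hε₂def, div_mul_eq_mul_div, div_le_iff₀ hσ]
        nlinarith
      show ε₂ * (2*(n:ℝ)) ≤ |v - 2*(n:ℝ)|
      calc ε₂ * (2*(n:ℝ)) ≤ 2*(n:ℝ) - v := h4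
        _ ≤ |2*(n:ℝ) - v| := le_abs_self _
        _ = |v - 2*(n:ℝ)| := abs_sub_comm _ _
    have hlow : Tendsto (fun n : ℕ => 1 - ENNReal.ofReal (1/(ε₁^2*(n:ℝ)))) atTop (nhds 1) := by
      have := ENNReal.Tendsto.sub (tendsto_const_nhds (x := (1:ℝ≥0∞)))
        (blind_lim0 ε₁) (Or.inr (by simp))
      simpa using this
    have hup : Tendsto (fun n : ℕ => 1 + ENNReal.ofReal (1/(ε₂^2*(n:ℝ)))) atTop (nhds 1) := by
      have := Tendsto.add (tendsto_const_nhds (x := (1:ℝ≥0∞)))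
        (blind_lim0 ε₂)
      simpa using this
    refine tendsto_of_tendsto_of_tendsto_of_le_of_le' hlow hup ?_ ?_
    · filter_upwards [eventually_gt_atTop 0] with n hn
      calc 1 - ENNReal.ofReal (1/(ε₁^2*(n:ℝ)))
          ≤ gammaMeasure n (1/2) {v : ℝ | τ < a + σ2 * v / (2 * (n:ℝ))} :=
            blind_meas_ge n hn (hAmeas n) hε₁ (hA n hn)
        _ ≤ _ := le_self_add
    · filter_upwards [eventually_gt_atTop 0] with n hn
      have hnr : (0:ℝ) < (n:ℝ) := by exact_mod_cast hn
      have hp : IsProbabilityMeasure (gammaMeasure n (1/2)) :=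
        isProbabilityMeasure_gammaMeasure hnr (by norm_num)
      exact add_le_add prob_le_one ((measure_mono (hB n hn)).trans (blind_tail n hn ε₂ hε₂))
  · -- a + b + σ2 < τ : B has probability → 1, A → 0
    set ε₁ : ℝ := (τ - a - σ2)/σ2 with hε₁def
    set ε₂ : ℝ := (τ - a - b - σ2)/σ2 with hε₂def
    have hε₁ : 0 < ε₁ := div_pos (by linarith) hσ
    have hε₂ : 0 < ε₂ := div_pos (by linarith) hσ
    have hA : ∀ n : ℕ, 0 < n → {v : ℝ | τ < a + σ2 * v / (2 * (n:ℝ))}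
        ⊆ {v : ℝ | ε₁ * (2*(n:ℝ)) ≤ |v - 2*(n:ℝ)|} := by
      intro n hn v hv
      have hnr : (0:ℝ) < (n:ℝ) := by exact_mod_cast hn
      simp only [mem_setOf_eq] at hv
      have h2 : τ - a ≤ σ2 * v / (2*(n:ℝ)) := by linarith
      have h3 : (τ - a) * (2*(n:ℝ)) ≤ σ2 * v := by
        have := mul_le_mul_of_nonneg_right h2 (by positivity : (0:ℝ) ≤ 2*(n:ℝ))
        rwa [div_mul_cancel₀ _ (by positivity : (2*(n:ℝ)) ≠ 0)] at this
      have h4 : ε₁ * (2*(n:ℝ)) ≤ v - 2*(n:ℝ) := by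
        rw [hε₁def, div_mul_eq_mul_div, div_le_iff₀ hσ]
        nlinarith
      show ε₁ * (2*(n:ℝ)) ≤ |v - 2*(n:ℝ)|
      exact h4.trans (le_abs_self _)
    have hB : ∀ n : ℕ, 0 < n → {v : ℝ | a + b + σ2 * v / (2 * (n:ℝ)) < τ}ᶜ
        ⊆ {v : ℝ | ε₂ * (2*(n:ℝ)) ≤ |v - 2*(n:ℝ)|} := by
      intro n hn v hv
      have hnr : (0:ℝ) < (n:ℝ) := by exact_mod_cast hn
      simp only [mem_compl_iff, mem_setOf_eq, not_lt] at hv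
      have h2 : τ - a - b ≤ σ2 * v / (2*(n:ℝ)) := by linarith
      have h3 : (τ - a - b) * (2*(n:ℝ)) ≤ σ2 * v := by
        have := mul_le_mul_of_nonneg_right h2 (by positivity : (0:ℝ) ≤ 2*(n:ℝ))
        rwa [div_mul_cancel₀ _ (by positivity : (2*(n:ℝ)) ≠ 0)] at this
      have h4 : ε₂ * (2*(n:ℝ)) ≤ v - 2*(n:ℝ) := by
        rw [hε₂def, div_mul_eq_mul_div, div_le_iff₀ hσ]
        nlinarith
      show ε₂ * (2*(n:ℝ)) ≤ |v - 2*(n:ℝ)|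
      exact h4.trans (le_abs_self _)
    have hlow : Tendsto (fun n : ℕ => 1 - ENNReal.ofReal (1/(ε₂^2*(n:ℝ)))) atTop (nhds 1) := by
      have := ENNReal.Tendsto.sub (tendsto_const_nhds (x := (1:ℝ≥0∞)))
        (blind_lim0 ε₂) (Or.inr (by simp))
      simpa using this
    have hup : Tendsto (fun n : ℕ => ENNReal.ofReal (1/(ε₁^2*(n:ℝ))) + 1) atTop (nhds 1) := by
      have := Tendsto.add (blind_lim0 ε₁) (tendsto_const_nhds (x := (1:ℝ≥0∞)))
      simpa using this
    refine tendsto_of_tendsto_of_tendsto_of_le_of_le' hlow hup ?_ ?_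
    · filter_upwards [eventually_gt_atTop 0] with n hn
      calc 1 - ENNReal.ofReal (1/(ε₂^2*(n:ℝ)))
          ≤ gammaMeasure n (1/2) {v : ℝ | a + b + σ2 * v / (2 * (n:ℝ)) < τ} :=
            blind_meas_ge n hn (hBmeas n) hε₂ (hB n hn)
        _ ≤ _ := le_add_self
    · filter_upwards [eventually_gt_atTop 0] with n hn
      have hnr : (0:ℝ) < (n:ℝ) := by exact_mod_cast hn
      have hp : IsProbabilityMeasure (gammaMeasure n (1/2)) :=
        isProbabilityMeasure_gammaMeasure hnr (by norm_num)
      exact add_le_add ((measure_mono (hA n hn)).trans (blind_tail n hn ε₁ hε₁)) prob_le_one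
end

section
/- Fix a real s > 0 and define f(β) = β·exp(β/s)/(exp(β/s) − 1) for β > 0. Let (β_n) be a sequence of positive reals with β_n → 0 and √n·β_n → ∞, and set τ_n = f(β_n). Let μ_n be the Gamma distribution on ℝ with shape parameter n and rate 1/2 (equivalently, the chi-squared distribution with 2n degrees of freedom), and define P_F(n) = μ_n{v : s·v/(2n) > τ_n} and P_M(n) = μ_n{v : s·v/(2n) < τ_n − β_n}. Then P_F(n) → 0 and P_M(n) → 0 as n → ∞; in particular P_F(n) + P_M(n) → 0. -/
open MeasureTheory ProbabilityTheory Filter Real Set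

namespace SqrtLawAux

lemma exp_ub {x : ℝ} (hx0 : 0 ≤ x) (hx1 : x ≤ 1) :
    Real.exp x ≤ 1 + x + x ^ 2 / 2 + 2 / 9 * x ^ 3 := by
  have h := Real.exp_bound (by rwa [abs_of_nonneg hx0]) (n := 3) (by norm_num)
  have hsum : ∑ i ∈ Finset.range 3, x ^ i / (Nat.factorial i) = 1 + x + x ^ 2 / 2 := by
    simp [Finset.sum_range_succ, Nat.factorial]
  rw [hsum, abs_of_nonneg hx0] at h
  have := abs_le.mp h
  have h2 : x ^ 3 * (((3 : ℕ) + 1) / ((Nat.factorial 3 : ℕ) * 3)) = 2 / 9 * x ^ 3 := by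
    norm_num [Nat.factorial]
    ring
  nlinarith [this.2]

lemma threshold_gap {s b : ℝ} (hs : 0 < s) (hb : 0 < b) (hbs : b ≤ s) :
    b / 6 + s ≤ b * Real.exp (b / s) / (Real.exp (b / s) - 1) ∧
    b * Real.exp (b / s) / (Real.exp (b / s) - 1) - b ≤ s - b / 6 := by
  set x := b / s with hxdef
  have hx0 : 0 < x := div_pos hb hs
  have hx1 : x ≤ 1 := (div_le_one hs).mpr hbs
  set E := Real.exp x with hE
  have hElb : 1 + x + x ^ 2 / 2 ≤ E := Real.quadratic_le_exp_of_nonneg hx0.le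
  have hEub : E ≤ 1 + x + x ^ 2 / 2 + 2 / 9 * x ^ 3 := exp_ub hx0.le hx1
  have hE1 : 0 < E - 1 := by nlinarith
  have hbsx : b = s * x := by rw [hxdef, eq_comm, mul_comm, div_mul_cancel₀ _ hs.ne']
  constructor
  · rw [le_div_iff₀ hE1]
    nlinarith [mul_nonneg hx0.le hx0.le, mul_nonneg (mul_nonneg hx0.le hx0.le) hx0.le,
      mul_nonneg (mul_nonneg (mul_nonneg hx0.le hx0.le) hx0.le) hx0.le, sq_nonneg (1 - x)]
  · have heq : b * E / (E - 1) - b = b / (E - 1) := by field_simp; ring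
    rw [heq, div_le_iff₀ hE1]
    nlinarith [mul_nonneg (mul_nonneg hx0.le hx0.le) hx0.le, sq_nonneg x]


lemma integrableOn_rpow_exp {p b : ℝ} (hp : -1 < p) (hb : 0 < b) :
    IntegrableOn (fun x : ℝ => x ^ p * Real.exp (-(b * x))) (Ioi 0) := by
  have h := integrableOn_rpow_mul_exp_neg_mul_rpow (p := 1) hp one_pos hb
  refine h.congr_fun (fun x hx => ?_) measurableSet_Ioi
  simp only [Real.rpow_one, neg_mul]

lemma moment {a r : ℝ} (ha : 0 < a) (hr : 0 < r) {j : ℝ} (hj : 0 ≤ j) :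
    ∫ x in Ioi 0, x ^ (a - 1 + j) * Real.exp (-(r * x)) =
      (1 / r) ^ (a + j) * Real.Gamma (a + j) := by
  have h := Real.integral_rpow_mul_exp_neg_mul_Ioi (a := a + j) (by linarith) hr
  rw [← h]
  congr 1
  ext x
  rw [add_sub_right_comm]

lemma gamma_centered_sq {a r : ℝ} (ha : 0 < a) (hr : 0 < r) :
    ∫⁻ x, ENNReal.ofReal ((x - a / r) ^ 2) ∂(gammaMeasure a r) = ENNReal.ofReal (a / r ^ 2) := by
  set m := a / r with hm
  set G : ℝ → ℝ := fun x => gammaPDFReal a r x * (x - m) ^ 2 with hG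
  set C : ℝ := r ^ a / Real.Gamma a with hC
  set F : ℝ → ℝ := fun x => C * (x ^ (a - 1 + 2) * Real.exp (-(r * x)))
      - (2 * m * C) * (x ^ (a - 1 + 1) * Real.exp (-(r * x)))
      + (m ^ 2 * C) * (x ^ (a - 1 + 0) * Real.exp (-(r * x))) with hF
  have hGF : ∀ x ∈ Ioi (0:ℝ), G x = F x := by
    intro x hx
    have hx0 : (0:ℝ) < x := hx
    have h2 : x ^ (a - 1 + 2) = x ^ (a - 1) * x ^ 2 := by
      rw [Real.rpow_add hx0, show ((2:ℝ)) = ((2:ℕ):ℝ) by norm_num, Real.rpow_natCast]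
    have h1 : x ^ (a - 1 + 1) = x ^ (a - 1) * x := by
      rw [Real.rpow_add hx0, Real.rpow_one]
    have h0 : x ^ (a - 1 + 0) = x ^ (a - 1) := by rw [add_zero]
    simp only [hG, hF, gammaPDFReal, if_pos hx0.le, hC, h2, h1, h0]
    ring
  have i2 : IntegrableOn (fun x => C * (x ^ (a - 1 + 2) * Real.exp (-(r * x)))) (Ioi 0) :=
    (integrableOn_rpow_exp (by linarith) hr).const_mul C
  have i1 : IntegrableOn (fun x => (2 * m * C) * (x ^ (a - 1 + 1) * Real.exp (-(r * x)))) (Ioi 0) :=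
    (integrableOn_rpow_exp (by linarith) hr).const_mul (2 * m * C)
  have i0 : IntegrableOn (fun x => (m ^ 2 * C) * (x ^ (a - 1 + 0) * Real.exp (-(r * x)))) (Ioi 0) :=
    (integrableOn_rpow_exp (by linarith) hr).const_mul (m ^ 2 * C)
  have i21 : IntegrableOn (fun x => C * (x ^ (a - 1 + 2) * Real.exp (-(r * x)))
      - (2 * m * C) * (x ^ (a - 1 + 1) * Real.exp (-(r * x)))) (Ioi 0) := i2.sub i1
  have hIF : IntegrableOn F (Ioi 0) := i21.add i0
  have hIG : IntegrableOn G (Ioi 0) := hIF.congr_fun (fun x hx => (hGF x hx).symm) measurableSet_Ioi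
  -- a.e. equality with indicator
  have hsub : {x : ℝ | ¬ ((Ioi (0:ℝ)).indicator G x = G x)} ⊆ {(0:ℝ)} := by
    intro x hx
    simp only [mem_setOf_eq, indicator_apply] at hx
    rcases lt_trichotomy x 0 with h | h | h
    · exfalso
      apply hx
      rw [if_neg (by simpa using h.not_gt)]
      simp only [hG, gammaPDFReal, if_neg (not_le.mpr h), zero_mul]
    · simp [h]
    · exact absurd (if_pos (mem_Ioi.mpr h)) hx
  have hae : (Ioi (0:ℝ)).indicator G =ᵐ[volume] G :=
    ae_iff.mpr (measure_mono_null hsub (measure_singleton 0))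
  have hGint : Integrable G := by
    have : Integrable ((Ioi (0:ℝ)).indicator G) := (integrable_indicator_iff measurableSet_Ioi).mpr hIG
    exact this.congr hae
  have hGnonneg : 0 ≤ᵐ[volume] G := by
    refine ae_of_all _ (fun x => ?_)
    exact mul_nonneg (gammaPDFReal_nonneg ha hr x) (sq_nonneg _)
  -- value of the real integral
  have hval : ∫ x, G x = a / r ^ 2 := by
    rw [← integral_congr_ae hae, integral_indicator measurableSet_Ioi,
      setIntegral_congr_fun measurableSet_Ioi hGF]
    simp only [hF]
    rw [integral_add i21 i0, integral_sub i2 i1,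
      integral_const_mul, integral_const_mul, integral_const_mul,
      moment ha hr (by norm_num : (0:ℝ) ≤ 2), moment ha hr (by norm_num : (0:ℝ) ≤ 1),
      moment ha hr (le_refl (0:ℝ))]
    have hG2 : Real.Gamma (a + 2) = (a + 1) * (a * Real.Gamma a) := by
      rw [show a + 2 = (a + 1) + 1 by ring, Real.Gamma_add_one (by linarith),
        Real.Gamma_add_one ha.ne']
    have hG1 : Real.Gamma (a + 1) = a * Real.Gamma a := Real.Gamma_add_one ha.ne'
    have hr2 : (1 / r) ^ (a + 2) = (1 / r) ^ a * (1 / r) ^ 2 := by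
      rw [Real.rpow_add (by positivity)]
      rw [show ((2:ℝ)) = ((2:ℕ):ℝ) by norm_num, Real.rpow_natCast]
    have hr1 : (1 / r) ^ (a + 1) = (1 / r) ^ a * (1 / r) := by
      rw [Real.rpow_add (by positivity), Real.rpow_one]
    have hr0 : (1 / r) ^ (a + 0) = (1 / r) ^ a := by rw [add_zero]
    have hcancel : r⁻¹ ^ a * r ^ a = 1 := by
      rw [← Real.mul_rpow (by positivity) hr.le, inv_mul_cancel₀ hr.ne', Real.one_rpow]
    have hΓ : Real.Gamma a ≠ 0 := (Real.Gamma_pos_of_pos ha).ne'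
    rw [hG2, hG1, hr2, hr1, hr0]
    simp only [hC, hm, one_div, add_zero]
    set u : ℝ := r⁻¹ ^ a with hu
    field_simp
    linear_combination hcancel
  -- convert to lintegral
  have hmeas : Measurable (gammaPDF a r) := (measurable_gammaPDFReal a r).ennreal_ofReal
  have hgm : Measurable (fun x : ℝ => ENNReal.ofReal ((x - m) ^ 2)) :=
    (((measurable_id'.sub_const m).pow_const 2).ennreal_ofReal)
  rw [gammaMeasure, lintegral_withDensity_eq_lintegral_mul _ hmeas hgm]
  have : ∀ x : ℝ, (gammaPDF a r * fun x => ENNReal.ofReal ((x - m) ^ 2)) x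
      = ENNReal.ofReal (G x) := by
    intro x
    simp only [Pi.mul_apply, gammaPDF, hG]
    rw [← ENNReal.ofReal_mul (gammaPDFReal_nonneg ha hr x)]
  rw [lintegral_congr this, ← ofReal_integral_eq_lintegral_ofReal hGint hGnonneg, hval]

lemma gamma_tail {a r d : ℝ} (ha : 0 < a) (hr : 0 < r) (hd : 0 < d) :
    gammaMeasure a r {x : ℝ | d ≤ |x - a / r|} ≤ ENNReal.ofReal (a / r ^ 2 / d ^ 2) := by
  set m := a / r with hm
  set S : Set ℝ := {x : ℝ | d ≤ |x - m|} with hS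
  have hkey : ENNReal.ofReal (d ^ 2) * gammaMeasure a r S ≤ ENNReal.ofReal (a / r ^ 2) := by
    have h1 : ENNReal.ofReal (d ^ 2) * gammaMeasure a r S
        = ∫⁻ x in S, ENNReal.ofReal (d ^ 2) ∂(gammaMeasure a r) := by
      rw [setLIntegral_const, mul_comm]
    rw [h1]
    calc ∫⁻ x in S, ENNReal.ofReal (d ^ 2) ∂(gammaMeasure a r)
        ≤ ∫⁻ x in S, ENNReal.ofReal ((x - m) ^ 2) ∂(gammaMeasure a r) := by
          refine setLIntegral_mono (((measurable_id'.sub_const m).pow_const 2).ennreal_ofReal)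
            (fun x hx => ?_)
          refine ENNReal.ofReal_le_ofReal ?_
          have : d ^ 2 ≤ |x - m| ^ 2 := pow_le_pow_left₀ hd.le hx 2
          rwa [sq_abs] at this
      _ ≤ ∫⁻ x, ENNReal.ofReal ((x - m) ^ 2) ∂(gammaMeasure a r) := setLIntegral_le_lintegral _ _
      _ = ENNReal.ofReal (a / r ^ 2) := gamma_centered_sq ha hr
  have hne0 : ENNReal.ofReal (d ^ 2) ≠ 0 := by
    simp [ENNReal.ofReal_eq_zero, not_le, pow_pos hd, hd.ne']
  have hnetop : ENNReal.ofReal (d ^ 2) ≠ ⊤ := ENNReal.ofReal_ne_top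
  have h2 : gammaMeasure a r S ≤ ENNReal.ofReal (a / r ^ 2) / ENNReal.ofReal (d ^ 2) := by
    rw [ENNReal.le_div_iff_mul_le (Or.inl hne0) (Or.inl hnetop), mul_comm]
    exact hkey
  rwa [← ENNReal.ofReal_div_of_pos (by positivity : (0:ℝ) < d ^ 2)] at h2

end SqrtLawAux

open MeasureTheory ProbabilityTheory Filter in
theorem sqrt_law_converse (s : ℝ) (hs : 0 < s) (β : ℕ → ℝ) (hβpos : ∀ n, 0 < β n)
    (hβ0 : Tendsto β atTop (nhds 0))
    (hβω : Tendsto (fun n : ℕ => Real.sqrt n * β n) atTop atTop) :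
    letI f : ℝ → ℝ := fun b => b * Real.exp (b / s) / (Real.exp (b / s) - 1)
    letI τ : ℕ → ℝ := fun n => f (β n)
    letI PF : ℕ → ENNReal := fun n =>
      gammaMeasure n (1 / 2) {v : ℝ | τ n < s * v / (2 * n)}
    letI PM : ℕ → ENNReal := fun n =>
      gammaMeasure n (1 / 2) {v : ℝ | s * v / (2 * n) < τ n - β n}
    Tendsto PF atTop (nhds 0) ∧ Tendsto PM atTop (nhds 0) ∧
      Tendsto (fun n => PF n + PM n) atTop (nhds 0) := by
  set PF : ℕ → ENNReal := fun n => gammaMeasure n (1 / 2)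
    {v : ℝ | β n * Real.exp (β n / s) / (Real.exp (β n / s) - 1) < s * v / (2 * n)} with hPFdef
  set PM : ℕ → ENNReal := fun n => gammaMeasure n (1 / 2)
    {v : ℝ | s * v / (2 * n) < β n * Real.exp (β n / s) / (Real.exp (β n / s) - 1) - β n}
    with hPMdef
  set g : ℕ → ENNReal := fun n => ENNReal.ofReal (36 * s ^ 2 / (n * β n ^ 2)) with hg
  have hglim : Tendsto g atTop (nhds 0) := by
    have h1 : Tendsto (fun n : ℕ => (n : ℝ) * β n ^ 2) atTop atTop := by
      refine (hβω.atTop_mul_atTop₀ hβω).congr (fun n => ?_)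
      rw [mul_mul_mul_comm, Real.mul_self_sqrt (Nat.cast_nonneg n), sq]
    have h2 : Tendsto (fun n : ℕ => 36 * s ^ 2 / ((n : ℝ) * β n ^ 2)) atTop (nhds 0) :=
      tendsto_const_nhds.div_atTop h1
    have h3 := ENNReal.tendsto_ofReal h2
    simpa using h3
  have key : ∀ n : ℕ, 1 ≤ n → β n ≤ s → PF n ≤ g n ∧ PM n ≤ g n := by
    intro n hn1 hbs
    have hb : 0 < β n := hβpos n
    have hn0 : (0 : ℝ) < (n : ℝ) := by exact_mod_cast hn1
    obtain ⟨hgap1, hgap2⟩ := SqrtLawAux.threshold_gap hs hb hbs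
    set b := β n with hbdef
    set d : ℝ := (n : ℝ) * b / (3 * s) with hd
    have hd0 : 0 < d := by positivity
    have hd' : 3 * s * d = (n : ℝ) * b := by rw [hd]; field_simp
    have htail := SqrtLawAux.gamma_tail (a := (n : ℝ)) (r := 1 / 2) (d := d) hn0
      (by norm_num) hd0
    have hmean : ((n : ℝ)) / ((1 : ℝ) / 2) = 2 * n := by field_simp
    have hval : ENNReal.ofReal ((n : ℝ) / (1 / 2 : ℝ) ^ 2 / d ^ 2) = g n := by
      rw [hg]
      congr 1
      rw [hd, ← hbdef]
      field_simp
      ring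
    constructor
    · refine le_trans (measure_mono ?_) (le_of_le_of_eq htail hval)
      intro v hv
      simp only [Set.mem_setOf_eq] at hv ⊢
      rw [hmean]
      have h1 : b / 6 + s < s * v / (2 * n) := lt_of_le_of_lt hgap1 hv
      have h2 : (b / 6 + s) * (2 * n) < s * v := (lt_div_iff₀ (by positivity)).mp h1
      have h3 : d ≤ v - 2 * n := by nlinarith [hd', hs.le, mul_pos hn0 hb]
      exact le_trans h3 (le_abs_self _)
    · refine le_trans (measure_mono ?_) (le_of_le_of_eq htail hval)
      intro v hv
      simp only [Set.mem_setOf_eq] at hv ⊢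
      rw [hmean]
      have h1 : s * v / (2 * n) < s - b / 6 := lt_of_lt_of_le hv hgap2
      have h2 : s * v < (s - b / 6) * (2 * n) := (div_lt_iff₀ (by positivity)).mp h1
      have h3 : d ≤ 2 * n - v := by nlinarith [hd', hs.le, mul_pos hn0 hb]
      exact le_trans h3 (by rw [abs_sub_comm]; exact le_abs_self _)
  have hev : ∀ᶠ n in atTop, PF n ≤ g n ∧ PM n ≤ g n := by
    have h1 : ∀ᶠ n in atTop, β n < s := hβ0.eventually_lt_const hs
    filter_upwards [h1, eventually_ge_atTop 1] with n hns hn1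
    exact key n hn1 hns.le
  have hPF : Tendsto PF atTop (nhds 0) :=
    tendsto_of_tendsto_of_tendsto_of_le_of_le' tendsto_const_nhds hglim
      (Eventually.of_forall fun n => zero_le) (hev.mono fun n h => h.1)
  have hPM : Tendsto PM atTop (nhds 0) :=
    tendsto_of_tendsto_of_tendsto_of_le_of_le' tendsto_const_nhds hglim
      (Eventually.of_forall fun n => zero_le) (hev.mono fun n h => h.2)
  exact ⟨hPF, hPM, by simpa using hPF.add hPM⟩
end
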